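/- For all n ≥ r ≥ 2, for every r-coloring of the edges of the complete graph K_n, there is a monochromatic component of order at least n/(r−1). -/

import Mathlib

/-!
Let `A` be the component of a vertex in colour `c₀`. Unless `A` is everything, each edge between
`A` and its complement `B` avoids `c₀`, and it suffices to find a vertex whose components in the
other `r - 1` colours have at least `n` vertices in total. If there is none, the components
through `x ∈ A` already cover `B`, so they meet `A` in fewer than `|A|` vertices, and symmetrically
for `B`. Counting pairs in a common component, colour by colour, gives a form
`⟨X, Y⟩ = ∑_c ∑_D |X ∩ D| |Y ∩ D|` (over the components `D` of colour `c`) with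
`⟨A, B⟩ ≥ |A| |B|`, `⟨A, A⟩ < |A|²` and `⟨B, B⟩ < |B|²`, contradicting Cauchy–Schwarz
`⟨A, B⟩² ≤ ⟨A, A⟩ ⟨B, B⟩`.
-/

open Finset

/-- Two vertices are connected by the edge set `E` (of a hypergraph)
if they are joined by a walk of edges from `E`. -/
def connBy {V : Type*} (E : Set (Finset V)) : V → V → Prop :=
  Relation.ReflTransGen (fun u w => ∃ e ∈ E, u ∈ e ∧ w ∈ e)

/-- The connected component of `v` in the hypergraph with edge set `E`. -/
def compOf {V : Type*} (E : Set (Finset V)) (v : V) : Set V :=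
  {u | connBy E u v}

section Partitions

-- `q c x = q c y` says that `x` and `y` lie in the same part of the `c`-th partition.
variable {V K ι : Type*} [DecidableEq K]

theorem sum_card_filter_eq_eq_sum_mul [Fintype K] (q : V → K) (X Y : Finset V) :
    ∑ y ∈ Y, #{x ∈ X | q x = q y} = ∑ k, #{x ∈ X | q x = k} * #{y ∈ Y | q y = k} := by
  rw [← sum_fiberwise Y q]
  refine sum_congr rfl fun k _ => ?_
  rw [sum_congr rfl fun y hy => by rw [(mem_filter.mp hy).2], sum_const, smul_eq_mul, mul_comm]

theorem sq_sum_sum_card_filter_eq_le [Fintype K] (q : ι → V → K) (C : Finset ι)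
    (X Y : Finset V) :
    (∑ c ∈ C, ∑ y ∈ Y, #{x ∈ X | q c x = q c y}) ^ 2 ≤
      (∑ c ∈ C, ∑ x ∈ X, #{x' ∈ X | q c x' = q c x}) *
        ∑ c ∈ C, ∑ y ∈ Y, #{y' ∈ Y | q c y' = q c y} := by
  simp only [sum_card_filter_eq_eq_sum_mul, ← sq, ← sum_product']
  exact sum_mul_sq_le_sq_mul_sq _ _ _

theorem card_le_sum_card_filter_eq (q : ι → V → K) {C : Finset ι} {X : Finset V} {v : V}
    (hcover : ∀ x ∈ X, ∃ c ∈ C, q c x = q c v) :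
    #X ≤ ∑ c ∈ C, #{x ∈ X | q c x = q c v} := by
  classical
  calc #X ≤ #(C.biUnion fun c => {x ∈ X | q c x = q c v}) := by
        refine card_le_card fun x hx => ?_
        obtain ⟨c, hc, hxv⟩ := hcover x hx
        exact mem_biUnion.mpr ⟨c, hc, mem_filter.mpr ⟨hx, hxv⟩⟩
    _ ≤ _ := card_biUnion_le

variable [DecidableEq V]

theorem sum_sum_card_filter_eq_lt_sq (q : ι → V → K) {C : Finset ι} {X Y : Finset V}
    (hXY : Disjoint X Y) (hX : X.Nonempty) (hcover : ∀ x ∈ X, ∀ y ∈ Y, ∃ c ∈ C, q c y = q c x)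
    (hsmall : ∀ x ∈ X, ∑ c ∈ C, #{u ∈ X ∪ Y | q c u = q c x} < #X + #Y) :
    ∑ c ∈ C, ∑ x ∈ X, #{x' ∈ X | q c x' = q c x} < #X ^ 2 := by
  rw [sum_comm, sq, ← smul_eq_mul, ← sum_const]
  refine sum_lt_sum_of_nonempty hX fun x hx => ?_
  have hY := card_le_sum_card_filter_eq q (hcover x hx)
  have hsplit : ∑ c ∈ C, #{u ∈ X ∪ Y | q c u = q c x} =
      ∑ c ∈ C, #{x' ∈ X | q c x' = q c x} + ∑ c ∈ C, #{y ∈ Y | q c y = q c x} := by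
    rw [← sum_add_distrib]
    exact sum_congr rfl fun c _ => by
      rw [filter_union, card_union_of_disjoint (disjoint_filter_filter hXY)]
  have := hsmall x hx
  omega

theorem exists_card_add_card_le_sum_card_filter_eq [Fintype K] (q : ι → V → K)
    {C : Finset ι} {A B : Finset V} (hAB : Disjoint A B) (hA : A.Nonempty) (hB : B.Nonempty)
    (hcover : ∀ x ∈ A, ∀ y ∈ B, ∃ c ∈ C, q c x = q c y) :
    ∃ v ∈ A ∪ B, #A + #B ≤ ∑ c ∈ C, #{u ∈ A ∪ B | q c u = q c v} := by
  by_contra! hsmall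
  have hAA := sum_sum_card_filter_eq_lt_sq q hAB hA
    (fun x hx y hy => (hcover x hx y hy).imp fun _ ⟨hc, h⟩ => ⟨hc, h.symm⟩)
    fun x hx => hsmall x (mem_union_left _ hx)
  have hBB := sum_sum_card_filter_eq_lt_sq q hAB.symm hB (fun y hy x hx => hcover x hx y hy)
    fun y hy => by rw [union_comm, add_comm]; exact hsmall y (mem_union_right _ hy)
  have hcross : #A * #B ≤ ∑ c ∈ C, ∑ y ∈ B, #{x ∈ A | q c x = q c y} := by
    rw [sum_comm, mul_comm, ← smul_eq_mul, ← sum_const]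
    exact sum_le_sum fun y hy => card_le_sum_card_filter_eq q fun x hx => hcover x hx y hy
  have := (sq_sum_sum_card_filter_eq_le q C A B).trans_lt (Nat.mul_lt_mul'' hAA hBB)
  rw [← mul_pow] at this
  exact (Nat.pow_le_pow_left hcross 2).not_gt this

end Partitions

theorem Finset.exists_div_card_le_of_le_sum {ι : Type*} {s : Finset ι} (hs : s.Nonempty)
    {f : ι → ℕ} {m : ℕ} (h : m ≤ ∑ i ∈ s, f i) : ∃ i ∈ s, (m : ℚ) / #s ≤ f i := by
  refine exists_le_of_sum_le hs ?_
  rw [sum_const, nsmul_eq_mul, mul_div_cancel₀ _ (by simpa using hs.ne_empty)]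
  exact_mod_cast h

section Connectivity

variable {V : Type*} {E : Set (Finset V)}

theorem connBy_of_mem {e : Finset V} (he : e ∈ E) {u w : V} (hu : u ∈ e) (hw : w ∈ e) :
    connBy E u w :=
  Relation.ReflTransGen.single ⟨e, he, hu, hw⟩

theorem connBy_symm {u w : V} (h : connBy E u w) : connBy E w u := by
  induction h with
  | refl => exact Relation.ReflTransGen.refl
  | tail _ hstep ih =>
    obtain ⟨e, he, hb, hc⟩ := hstep
    exact Relation.ReflTransGen.head ⟨e, he, hc, hb⟩ ih

theorem compOf_eq_compOf_iff {u v : V} : compOf E u = compOf E v ↔ connBy E u v := by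
  refine ⟨fun h => (h ▸ Relation.ReflTransGen.refl : u ∈ compOf E v), fun h => ?_⟩
  ext w
  exact ⟨fun hw => hw.trans h, fun hw => hw.trans (connBy_symm h)⟩

open Classical in
theorem ncard_compOf [Fintype V] (v : V) :
    (compOf E v).ncard = #{u | compOf E u = compOf E v} := by
  classical
  simp_rw [compOf_eq_compOf_iff]
  rw [Set.ncard_eq_toFinset_card', compOf, Set.toFinset_ofPred]

end Connectivity

section Colourings

variable {V κ : Type*} [DecidableEq V]

def monoEdges (χ : Finset V → κ) (c : κ) : Set (Finset V) :=
  {e | e.card = 2 ∧ χ e = c}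

theorem exists_ne_compOf_monoEdges_eq {χ : Finset V → κ} {c₀ : κ} {v x y : V}
    (hx : x ∈ compOf (monoEdges χ c₀) v) (hy : y ∉ compOf (monoEdges χ c₀) v) :
    ∃ c ≠ c₀, compOf (monoEdges χ c) x = compOf (monoEdges χ c) y := by
  have hxy : x ≠ y := by rintro rfl; exact hy hx
  have hedge : {x, y} ∈ monoEdges χ (χ {x, y}) := ⟨card_pair hxy, rfl⟩
  have hxe : x ∈ ({x, y} : Finset V) := mem_insert_self x _
  have hye : y ∈ ({x, y} : Finset V) := mem_insert_of_mem (mem_singleton_self y)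
  refine ⟨χ {x, y}, fun hc => hy ?_, compOf_eq_compOf_iff.mpr (connBy_of_mem hedge hxe hye)⟩
  exact (connBy_of_mem (hc ▸ hedge) hye hxe).trans hx

end Colourings

theorem stmt12 (n r : ℕ) (hr : 2 ≤ r) (hn : r ≤ n) (χ : Finset (Fin n) → Fin r) :
    ∃ (c : Fin r) (v : Fin n),
      (n : ℚ) / ((r : ℚ) - 1) ≤ (compOf {e | e.card = 2 ∧ χ e = c} v).ncard := by
  classical
  change ∃ c v, _ ≤ ((compOf (monoEdges χ c) v).ncard : ℚ)
  let c₀ : Fin r := ⟨0, by omega⟩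
  let v₀ : Fin n := ⟨0, by omega⟩
  set A : Finset (Fin n) := (compOf (monoEdges χ c₀) v₀).toFinset
  have hA : A.Nonempty := ⟨v₀, Set.mem_toFinset.mpr Relation.ReflTransGen.refl⟩
  obtain hB | hB := (Aᶜ).eq_empty_or_nonempty
  · refine ⟨c₀, v₀, ?_⟩
    rw [Set.toFinset_eq_univ.mp (compl_eq_empty_iff _ |>.mp hB), Set.ncard_univ,
      Nat.card_eq_fintype_card, Fintype.card_fin]
    have : (2 : ℚ) ≤ r := by exact_mod_cast hr
    exact div_le_self (Nat.cast_nonneg n) (by linarith)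
  have hcover : ∀ x ∈ A, ∀ y ∈ Aᶜ, ∃ c ∈ univ.erase c₀,
      compOf (monoEdges χ c) x = compOf (monoEdges χ c) y := fun x hx y hy =>
    (exists_ne_compOf_monoEdges_eq (Set.mem_toFinset.mp hx)
      (Set.mem_toFinset.not.mp (mem_compl.mp hy))).imp
        fun c ⟨hc, h⟩ => ⟨mem_erase.mpr ⟨hc, mem_univ c⟩, h⟩
  obtain ⟨v, -, hv⟩ := exists_card_add_card_le_sum_card_filter_eq
    (fun c => compOf (monoEdges χ c)) disjoint_compl_right hA hB hcover
  rw [union_compl, card_add_card_compl, Fintype.card_fin] at hv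
  have hcard : #(univ.erase c₀) = r - 1 := by
    rw [card_erase_of_mem (mem_univ _), card_univ, Fintype.card_fin]
  obtain ⟨c, -, hc⟩ := exists_div_card_le_of_le_sum (card_pos.mp (by omega)) hv
  refine ⟨c, v, ?_⟩
  rwa [ncard_compOf, ← Nat.cast_one, ← Nat.cast_sub (by omega), ← hcard]
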